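/- Let X and Y be finite nonempty types and let p be a probability mass function on X × Y with marginals p_X and p_Y, and let p(x|y) = p(x,y)/p_Y(y) for p_Y(y) > 0 be the conditional pmf. Define H(X) = −∑_x p_X(x) log p_X(x) and I(X;Y) = ∑_{x,y} p(x,y) log( p(x,y) / (p_X(x) p_Y(y)) ), with the convention 0 log 0 = 0. Let q : X × Y → ℝ be a family of conditional probability mass functions (q(x|y) ≥ 0, ∑_x q(x|y) = 1 for every y) with q(x|y) > 0 whenever p(x,y) > 0. Then the gap in the Barber–Agakov bound is exactly an averaged Kullback–Leibler divergence: I(X;Y) − H(X) − ∑_{x,y} p(x,y) log q(x|y) = ∑_y p_Y(y) · ∑_x p(x|y) log( p(x|y) / q(x|y) ), and in particular this gap is nonnegative. -/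

import Mathlib

/-!
Write `p(x|y) = p(x,y)/p_Y(y)`. Expanding the logarithms termwise, every summand of the gap
collapses to `p(x,y) log (p(x|y) / q(x|y))`, and regrouping over `y` gives the averaged
Kullback–Leibler divergence. Its nonnegativity is Gibbs' inequality, obtained by summing
`a - b ≤ a log (a / b)` (a form of `log t ≤ t - 1`) over `x`, where both `p(·|y)` and `q(·|y)`
have total mass one.
-/

open Finset Real

lemma sub_le_mul_log_div {a b : ℝ} (ha : 0 ≤ a) (hb : 0 ≤ b) (hab : 0 < a → 0 < b) :
    a - b ≤ a * log (a / b) := by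
  rcases ha.eq_or_lt with rfl | ha
  · simpa using hb
  · have hb := hab ha
    calc a - b = a * (1 - (a / b)⁻¹) := by field_simp
      _ ≤ a * log (a / b) := by gcongr; exact one_sub_inv_le_log_of_pos (by positivity)

lemma sum_sub_sum_le_sum_mul_log_div {ι : Type*} (s : Finset ι) {a b : ι → ℝ}
    (ha : ∀ i, 0 ≤ a i) (hb : ∀ i, 0 ≤ b i) (hab : ∀ i, 0 < a i → 0 < b i) :
    ∑ i ∈ s, a i - ∑ i ∈ s, b i ≤ ∑ i ∈ s, a i * log (a i / b i) := by
  rw [← sum_sub_distrib]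
  exact sum_le_sum fun i _ => sub_le_mul_log_div (ha i) (hb i) (hab i)

/-- With `a = p(x,y)`, `b = p_X(x)`, `c = p_Y(y)` and `d = q(x|y)`: one summand of the gap. -/
lemma mul_log_div_mul_add_mul_log_sub_mul_log {a b c d : ℝ}
    (hb : 0 < b) (hc : 0 < c) (hd : 0 < d) :
    a * log (a / (b * c)) + a * log b - a * log d = c * (a / c * log (a / c / d)) := by
  rcases eq_or_ne a 0 with rfl | ha
  · simp
  rw [← mul_assoc, mul_div_cancel₀ a hc.ne', log_div (by positivity) hd.ne',
    log_div ha (by positivity), log_div ha hc.ne', log_mul hb.ne' hc.ne']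
  ring

theorem barber_agakov_gap_general {X Y : Type*} [Fintype X] [Fintype Y]
    (p : X → Y → ℝ)
    (hp_nonneg : ∀ x y, 0 ≤ p x y)
    (q : X → Y → ℝ)
    (hq_nonneg : ∀ x y, 0 ≤ q x y)
    (hq_sum : ∀ y, ∑ x, q x y = 1)
    (hq_pos : ∀ x y, 0 < p x y → 0 < q x y) :
    (∑ x, ∑ y, p x y *
          Real.log (p x y / ((∑ y', p x y') * (∑ x', p x' y))))
        - (- ∑ x, (∑ y, p x y) * Real.log (∑ y, p x y))
        - (∑ x, ∑ y, p x y * Real.log (q x y))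
      = ∑ y, (∑ x', p x' y) *
          (∑ x, (p x y / (∑ x', p x' y)) *
            Real.log ((p x y / (∑ x', p x' y)) / q x y))
    ∧ 0 ≤ ∑ y, (∑ x', p x' y) *
          (∑ x, (p x y / (∑ x', p x' y)) *
            Real.log ((p x y / (∑ x', p x' y)) / q x y)) := by
  have hpX_pos : ∀ x y, 0 < p x y → 0 < ∑ y', p x y' := fun x y h =>
    h.trans_le (single_le_sum (fun y' _ => hp_nonneg x y') (mem_univ y))
  have hpY_pos : ∀ x y, 0 < p x y → 0 < ∑ x', p x' y := fun x y h =>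
    h.trans_le (single_le_sum (fun x' _ => hp_nonneg x' y) (mem_univ x))
  have hpY_nonneg : ∀ y, 0 ≤ ∑ x', p x' y := fun y => sum_nonneg fun x _ => hp_nonneg x y
  refine ⟨?_, sum_nonneg fun y _ => ?_⟩
  · have hterm : ∀ x y, p x y * log (p x y / ((∑ y', p x y') * ∑ x', p x' y))
        + p x y * log (∑ y', p x y') - p x y * log (q x y)
        = (∑ x', p x' y) * (p x y / (∑ x', p x' y) * log (p x y / (∑ x', p x' y) / q x y)) := by
      intro x y
      rcases (hp_nonneg x y).eq_or_lt with h0 | hpos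
      · simp [← h0]
      · exact mul_log_div_mul_add_mul_log_sub_mul_log (hpX_pos x y hpos) (hpY_pos x y hpos)
          (hq_pos x y hpos)
    have hentropy : ∑ x, (∑ y, p x y) * log (∑ y, p x y)
        = ∑ x, ∑ y, p x y * log (∑ y', p x y') := sum_congr rfl fun x _ => sum_mul ..
    simp only [hentropy, sub_neg_eq_add, ← sum_add_distrib, ← sum_sub_distrib, hterm]
    rw [sum_comm]
    simp only [mul_sum]
  · rcases (hpY_nonneg y).eq_or_lt with h0 | hpY
    · simp [← h0]
    refine mul_nonneg hpY.le ?_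
    have hcond_sum : ∑ x, p x y / ∑ x', p x' y = 1 := by rw [← sum_div, div_self hpY.ne']
    have hgibbs := sum_sub_sum_le_sum_mul_log_div univ
      (fun x => div_nonneg (hp_nonneg x y) hpY.le) (fun x => hq_nonneg x y)
      (fun x hx => hq_pos x y (by simpa [hpY] using hx))
    rwa [hcond_sum, hq_sum, sub_self] at hgibbs

/-- The gap in the Barber–Agakov bound is exactly the average (over `p_Y`) of the
Kullback–Leibler divergence between the true conditional `p(·|y)` and the
variational conditional `q(·|y)`; in particular, the gap is nonnegative.
All quantities are explicit finite sums with natural log and `0 log 0 = 0`. -/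
theorem barber_agakov_gap {X Y : Type*} [Fintype X] [Fintype Y]
    [Nonempty X] [Nonempty Y]
    (p : X → Y → ℝ)
    (hp_nonneg : ∀ x y, 0 ≤ p x y)
    (hp_sum : ∑ x, ∑ y, p x y = 1)
    (q : X → Y → ℝ)
    (hq_nonneg : ∀ x y, 0 ≤ q x y)
    (hq_sum : ∀ y, ∑ x, q x y = 1)
    (hq_pos : ∀ x y, 0 < p x y → 0 < q x y) :
    (∑ x, ∑ y, p x y *
          Real.log (p x y / ((∑ y', p x y') * (∑ x', p x' y))))
        - (- ∑ x, (∑ y, p x y) * Real.log (∑ y, p x y))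
        - (∑ x, ∑ y, p x y * Real.log (q x y))
      = ∑ y, (∑ x', p x' y) *
          (∑ x, (p x y / (∑ x', p x' y)) *
            Real.log ((p x y / (∑ x', p x' y)) / q x y))
    ∧ 0 ≤ ∑ y, (∑ x', p x' y) *
          (∑ x, (p x y / (∑ x', p x' y)) *
            Real.log ((p x y / (∑ x', p x' y)) / q x y)) :=
  barber_agakov_gap_general p hp_nonneg q hq_nonneg hq_sum hq_pos
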